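/- arXiv:1711.00239 — 3 statements merged into one kernel-verified Lean document; each statement's English description precedes it below -/
import Mathlib

section
/- Let Y, Y* and Ȳ⁽¹⁾,…,Ȳ⁽ᵐ⁾, Ŷ⁽¹⁾,…,Ŷ⁽ᵐ⁾ be real c×t matrices. Suppose Y satisfies ‖Y − Ȳ⁽ᵏ⁾‖²_F ≤ min_j ‖Ŷ⁽ʲ⁾ − Ȳ⁽ᵏ⁾‖²_F for all k = 1,…,m, and that there exists an index k such that Tr((Ŷ⁽ʲ⁾ − Y)ᵀ (Y* − Ȳ⁽ᵏ⁾)) ≤ 0 for all j = 1,…,m. Then ‖Y − Y*‖²_F ≤ min_j ‖Ŷ⁽ʲ⁾ − Y*‖²_F. -/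
open Finset Matrix

/-- Squared Frobenius norm of a real matrix. -/
noncomputable def frobSq {c t : ℕ} (A : Matrix (Fin c) (Fin t) ℝ) : ℝ :=
  ∑ i, ∑ j, (A i j) ^ 2

/-! Expanding both distances to `Y*` around `Ȳ` gives
`‖Ŷ - Y*‖² - ‖Y - Y*‖² = (‖Ŷ - Ȳ‖² - ‖Y - Ȳ‖²) - 2 Tr((Ŷ - Y)ᵀ (Y* - Ȳ))`,
and both terms on the right are nonnegative by hypothesis. -/

section Frobenius

variable {c t : ℕ}

lemma frobSq_eq_trace (A : Matrix (Fin c) (Fin t) ℝ) : frobSq A = trace (Aᵀ * A) := by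
  simp only [frobSq, trace, Matrix.diag, mul_apply, transpose_apply, sq]
  exact Finset.sum_comm

lemma frobSq_add (A B : Matrix (Fin c) (Fin t) ℝ) :
    frobSq (A + B) = frobSq A + 2 * trace (Aᵀ * B) + frobSq B := by
  have hBA : trace (Bᵀ * A) = trace (Aᵀ * B) := by
    rw [← trace_transpose, transpose_mul, transpose_transpose]
  simp only [frobSq_eq_trace, transpose_add, Matrix.add_mul, Matrix.mul_add, trace_add, hBA]
  ring

lemma frobSq_sub_sub_frobSq_sub (P Q S R : Matrix (Fin c) (Fin t) ℝ) :
    frobSq (P - S) - frobSq (Q - S) =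
      frobSq (P - R) - frobSq (Q - R) - 2 * trace ((P - Q)ᵀ * (S - R)) := by
  have hP := frobSq_add (P - R) (R - S)
  have hQ := frobSq_add (Q - R) (R - S)
  have hPQ : trace ((P - Q)ᵀ * (S - R)) =
      trace ((Q - R)ᵀ * (R - S)) - trace ((P - R)ᵀ * (R - S)) := by
    rw [← trace_sub, ← Matrix.sub_mul, ← transpose_sub, show Q - R - (P - R) = -(P - Q) by abel,
      ← neg_sub S R, transpose_neg, Matrix.neg_mul, Matrix.mul_neg, neg_neg]
  rw [sub_add_sub_cancel] at hP hQ
  rw [hP, hQ, hPQ]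
  ring

lemma frobSq_sub_le_frobSq_sub_of_trace_nonpos {Y Yhat Ybar Ystar : Matrix (Fin c) (Fin t) ℝ}
    (hfeas : frobSq (Y - Ybar) ≤ frobSq (Yhat - Ybar))
    (htrace : trace ((Yhat - Y)ᵀ * (Ystar - Ybar)) ≤ 0) :
    frobSq (Y - Ystar) ≤ frobSq (Yhat - Ystar) := by
  have := frobSq_sub_sub_frobSq_sub Yhat Y Ystar Ybar
  linarith

end Frobenius

theorem stmt1 {c t m : ℕ}
    (Y Ystar : Matrix (Fin c) (Fin t) ℝ)
    (Ybar Yhat : Fin m → Matrix (Fin c) (Fin t) ℝ)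
    (hfeas : ∀ k j, frobSq (Y - Ybar k) ≤ frobSq (Yhat j - Ybar k))
    (hcond : ∃ k, ∀ j,
      Matrix.trace ((Yhat j - Y)ᵀ * (Ystar - Ybar k)) ≤ 0) :
    ∀ j, frobSq (Y - Ystar) ≤ frobSq (Yhat j - Ystar) := by
  obtain ⟨k, hk⟩ := hcond
  exact fun j => frobSq_sub_le_frobSq_sub_of_trace_nonpos (hfeas k j) (hk j)
end

section
/- For any real numbers g and y with y ∈ {−1, 1}, the hinge loss admits the variational reformulation max(1 − y·g, 0) = min_{μ ≥ 0} |g − y − y·μ|, where the minimum is over nonnegative reals μ. -/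
theorem isLeast_abs_sub_of_nonneg (a : ℝ) :
    IsLeast {x : ℝ | ∃ μ : ℝ, 0 ≤ μ ∧ x = |a - μ|} (max (-a) 0) := by
  constructor
  · refine ⟨max a 0, le_max_right _ _, ?_⟩
    rcases le_total a 0 with ha | ha
    · rw [max_eq_right ha, max_eq_left (neg_nonneg.mpr ha), sub_zero, abs_of_nonpos ha]
    · rw [max_eq_left ha, max_eq_right (neg_nonpos.mpr ha), sub_self, abs_zero]
  · rintro _ ⟨μ, hμ, rfl⟩
    exact max_le (by linarith [neg_abs_le (a - μ)]) (abs_nonneg _)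

theorem abs_sub_sub_mul_eq_abs_mul_sub_sub {y : ℝ} (hy : |y| = 1) (g μ : ℝ) :
    |g - y - y * μ| = |y * g - 1 - μ| := by
  have hyy : y * y = 1 := by rw [← abs_mul_abs_self, hy, one_mul]
  calc |g - y - y * μ| = |y * (y * g - 1 - μ)| := by congr 1; linear_combination (-g) * hyy
    _ = |y * g - 1 - μ| := by rw [abs_mul, hy, one_mul]

theorem stmt2 (g y : ℝ) (hy : y = -1 ∨ y = 1) :
    IsLeast {x : ℝ | ∃ μ : ℝ, 0 ≤ μ ∧ x = |g - y - y * μ|}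
      (max (1 - y * g) 0) := by
  have hy_abs : |y| = 1 := by rcases hy with rfl | rfl <;> norm_num
  simpa only [abs_sub_sub_mul_eq_abs_mul_sub_sub hy_abs, neg_sub]
    using isLeast_abs_sub_of_nonneg (y * g - 1)
end

section
/- For any real numbers g and y with y ∈ {−1, 1}, the capped hinge loss satisfies min(max(1 − y·g, 0), 1) = min(min_{μ ≥ 0} |g − y − y·μ|, 1). -/
/-! Since `y ^ 2 = 1`, `|g - y - y μ| = |(y g - 1) - μ|`, so the infimum is the distance from
`y g - 1` to `[0, ∞)`, namely `max (1 - y g) 0`; the hinge loss and the infimum agree before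
either is capped. -/

lemma sInf_abs_sub_nonneg (a : ℝ) :
    sInf {x : ℝ | ∃ μ : ℝ, 0 ≤ μ ∧ x = |a - μ|} = max (-a) 0 := by
  apply le_antisymm
  · have hmem : max (-a) 0 ∈ {x : ℝ | ∃ μ : ℝ, 0 ≤ μ ∧ x = |a - μ|} := by
      refine ⟨max a 0, le_max_right _ _, ?_⟩
      rcases le_total 0 a with h | h
      · simp [h]
      · simp [h, abs_of_nonpos]
    exact csInf_le ⟨0, by rintro _ ⟨μ, -, rfl⟩; exact abs_nonneg _⟩ hmem
  · refine le_csInf ⟨_, 0, le_rfl, rfl⟩ ?_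
    rintro _ ⟨μ, hμ, rfl⟩
    exact max_le (by linarith [neg_abs_le (a - μ)]) (abs_nonneg _)

lemma abs_sub_sub_mul_of_abs_eq_one {y : ℝ} (hy : |y| = 1) (g μ : ℝ) :
    |g - y - y * μ| = |(y * g - 1) - μ| := by
  have hyy : y * y = 1 := by rw [← abs_mul_abs_self, hy, one_mul]
  calc |g - y - y * μ| = |y| * |(y * g - 1) - μ| := by
        rw [← abs_mul]; congr 1; linear_combination (-g) * hyy
    _ = |(y * g - 1) - μ| := by rw [hy, one_mul]

theorem stmt3 (g y : ℝ) (hy : y = -1 ∨ y = 1) :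
    min (max (1 - y * g) 0) 1 =
      min (sInf {x : ℝ | ∃ μ : ℝ, 0 ≤ μ ∧ x = |g - y - y * μ|}) 1 := by
  have habs : |y| = 1 := by rcases hy with rfl | rfl <;> norm_num
  simp_rw [abs_sub_sub_mul_of_abs_eq_one habs, sInf_abs_sub_nonneg, neg_sub]
end
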